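/- Let D be an ABAF, F_D its instantiated BAF, and σ one of the complete, grounded, stable or preferred semantics. If x ∈ A_D is expendable and G is the BAF obtained by removing x from F_D, then {asms(E) | E ∈ σ(F_D)} = {asms(E) | E ∈ σ(G)}. -/
import Mathlib


/-! ## Bipolar argumentation frameworks (BAFs) -/

/-- A bipolar argumentation framework: a set of arguments together with
attack and support relations. -/
structure BAF (α : Type) where
  args : Set α
  att : Set (α × α)
  sup : Set (α × α)

namespace BAF

variable {α : Type} (F : BAF α)

/-- The closure of a set of arguments: `cl(E) = E ∪ {a ∈ A | ∃ e ∈ E, (e,a) ∈ Sup}`. -/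
def cl (E : Set α) : Set α := E ∪ {a ∈ F.args | ∃ e ∈ E, (e, a) ∈ F.sup}

/-- `E` is closed iff `E = cl(E)`. -/
def Closed (E : Set α) : Prop := E = F.cl E

/-- `E` is conflict-free iff no two members attack each other. -/
def ConflictFree (E : Set α) : Prop := ∀ x ∈ E, ∀ y ∈ E, (x, y) ∉ F.att

/-- `E` attacks the argument `a`. -/
def AttacksArg (E : Set α) (a : α) : Prop := ∃ e ∈ E, (e, a) ∈ F.att

/-- `E` attacks the set `S` (i.e. some element of it). -/
def AttacksSet (E S : Set α) : Prop := ∃ a ∈ S, F.AttacksArg E a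

/-- `E` defends `b` iff `E` attacks every closed set `S ⊆ args` attacking `b`. -/
def Defends (E : Set α) (b : α) : Prop :=
  ∀ S, S ⊆ F.args → F.Closed S → F.AttacksArg S b → F.AttacksSet E S

/-- The characteristic function `Γ(E) = {a ∈ A | E defends a}`. -/
def gamma (E : Set α) : Set α := {a ∈ F.args | F.Defends E a}

/-- `E` is admissible iff it is a closed, conflict-free set of arguments with `E ⊆ Γ(E)`. -/
def Admissible (E : Set α) : Prop :=
  E ⊆ F.args ∧ F.Closed E ∧ F.ConflictFree E ∧ E ⊆ F.gamma E

/-- `E` is complete iff it is admissible and `E = Γ(E)`. -/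
def Complete (E : Set α) : Prop := F.Admissible E ∧ E = F.gamma E

/-- `E` is preferred iff it is ⊆-maximal among complete sets. -/
def Preferred (E : Set α) : Prop := F.Complete E ∧ ∀ S, F.Complete S → E ⊆ S → S = E

/-- `E` is grounded iff it is admissible and equals the intersection of all complete
sets (taken to be `∅` when no complete set exists). -/
def Grounded (E : Set α) : Prop :=
  F.Admissible E ∧
    (((∃ S, F.Complete S) ∧ E = ⋂₀ {S | F.Complete S}) ∨
      ((¬ ∃ S, F.Complete S) ∧ E = ∅))

/-- `E` is stable iff it is admissible and attacks every argument outside of it. -/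
def Stable (E : Set α) : Prop :=
  F.Admissible E ∧ ∀ a ∈ F.args, a ∉ E → F.AttacksArg E a

/-- The BAF obtained by removing the argument `x`: the restriction to `args \ {x}`. -/
def remove (x : α) : BAF α where
  args := F.args \ {x}
  att := {p ∈ F.att | p.1 ≠ x ∧ p.2 ≠ x}
  sup := {p ∈ F.sup | p.1 ≠ x ∧ p.2 ≠ x}

end BAF

/-- The four complete-based semantics: complete, grounded, stable, preferred. -/
inductive Sem4 where
  | com | grd | stb | prf

/-- The σ-extensions of a BAF, for σ among complete, grounded, stable, preferred. -/
def BAF.ext {α : Type} (F : BAF α) : Sem4 → Set α → Prop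
  | .com => F.Complete
  | .grd => F.Grounded
  | .stb => F.Stable
  | .prf => F.Preferred

/-! ## Premise-augmented BAFs (pBAFs) -/

/-- A premise-augmented BAF: a BAF together with a premise function. -/
structure PBAF (α β : Type) where
  toBAF : BAF α
  prem : α → Set β

namespace PBAF

variable {α β : Type} (P : PBAF α β)

/-- The premises of a set of arguments: `prem(E) = ⋃ a ∈ E, prem(a)`. -/
def premSet (E : Set α) : Set β := ⋃ a ∈ E, P.prem a

/-- `E` is exhaustive iff every argument whose premises are contained in `prem(E)`
belongs to `E`. -/
def Exhaustive (E : Set α) : Prop :=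
  ∀ a ∈ P.toBAF.args, P.prem a ⊆ P.premSet E → a ∈ E

/-- `E` is admissible in a pBAF iff it is admissible in the underlying BAF and exhaustive. -/
def Admissible (E : Set α) : Prop := P.toBAF.Admissible E ∧ P.Exhaustive E

/-- `oldprf`: ⊆-maximal among the pBAF-admissible sets. -/
def OldPrf (E : Set α) : Prop := P.Admissible E ∧ ∀ S, P.Admissible S → E ⊆ S → S = E

/-- The pBAF obtained by removing the argument `x`. -/
def remove (x : α) : PBAF α β := ⟨P.toBAF.remove x, P.prem⟩

end PBAF

/-- The six semantics for pBAFs: admissible, complete, oldprf, preferred, grounded, stable. -/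
inductive Sem6 where
  | adm | com | oldprf | prf | grd | stb

/-- The σ-extensions of a pBAF. The complete, preferred, grounded and stable
sets are those of the underlying BAF. -/
def PBAF.ext {α β : Type} (P : PBAF α β) : Sem6 → Set α → Prop
  | .adm => P.Admissible
  | .com => P.toBAF.Complete
  | .oldprf => P.OldPrf
  | .prf => P.toBAF.Preferred
  | .grd => P.toBAF.Grounded
  | .stb => P.toBAF.Stable

/-! ## Assumption-based argumentation frameworks (ABAFs) -/

/-- A rule, with a head atom and a finite body of atoms. -/
structure ABARule (α : Type) where
  head : α
  body : Finset α
deriving DecidableEq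

/-- An assumption-based argumentation framework `(L, R, A, ‾)`. -/
structure ABAF (α : Type) [DecidableEq α] where
  L : Finset α
  R : Finset (ABARule α)
  A : Finset α
  A_nonempty : A.Nonempty
  A_sub_L : A ⊆ L
  contrary : α → α
  rules_wf : ∀ r ∈ R, r.head ∈ L ∧ r.body ⊆ L
  contrary_mem_L : ∀ a ∈ A, contrary a ∈ L

/-- Tree-based arguments: either a single assumption leaf, or an inner node
(labeled with the head of a rule) with a list of child subtrees, one for each
body element of the rule.  (A node with the empty list of children represents
an application of a rule with empty body, i.e. a node whose single child is
labeled `⊤`.) -/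
inductive ATree (α : Type) where
  | asm : α → ATree α
  | node : α → List (ATree α) → ATree α

namespace ATree

/-- The label of the root, i.e. the conclusion of the argument. -/
def root {α : Type} : ATree α → α
  | .asm a => a
  | .node p _ => p

/-- `t.IsAsmLeaf a` holds iff `a` is the label of some (assumption) leaf of `t`. -/
inductive IsAsmLeaf {α : Type} : ATree α → α → Prop
  | asm (a : α) : IsAsmLeaf (ATree.asm a) a
  | node {p : α} {cs : List (ATree α)} {c : ATree α} {a : α} :
      c ∈ cs → IsAsmLeaf c a → IsAsmLeaf (ATree.node p cs) a

/-- The support of a tree-based argument: the set of its assumption leaf labels. -/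
def asms {α : Type} (t : ATree α) : Set α := {a | t.IsAsmLeaf a}

/-- `Subarg t' t`: `t'` is a sub-argument (rooted labeled subtree whose leaves are
among the leaves) of `t`. -/
inductive Subarg {α : Type} : ATree α → ATree α → Prop
  | refl (t : ATree α) : Subarg t t
  | node {t c : ATree α} {p : α} {cs : List (ATree α)} :
      c ∈ cs → Subarg t c → Subarg t (ATree.node p cs)

end ATree

namespace ABAF

/-- Well-formedness of a tree-based argument w.r.t. an ABAF `D`: assumption
leaves are labeled by assumptions, and each inner node is labeled by the head
of a rule of `D` and has exactly `|body(r)|` children whose roots are the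
distinct elements of `body(r)`. -/
inductive WF {α : Type} [DecidableEq α] (D : ABAF α) : ATree α → Prop
  | asm {a : α} : a ∈ D.A → WF D (ATree.asm a)
  | node {p : α} {cs : List (ATree α)} (r : ABARule α) :
      r ∈ D.R → r.head = p →
      (cs.map ATree.root).Nodup →
      (cs.map ATree.root).toFinset = r.body →
      (∀ c ∈ cs, WF D c) →
      WF D (ATree.node p cs)

variable {α : Type} [DecidableEq α] (D : ABAF α)

/-- `A_D`: the set of all tree-based arguments of `D`. -/
def argsSet : Set (ATree α) := {t | D.WF t}

/-- `Th_D(S)`: the conclusions derivable from (subsets of) `S`. -/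
def Th (S : Set α) : Set α := {p | ∃ t, D.WF t ∧ t.root = p ∧ t.asms ⊆ S}

/-- `cl(S) = Th_D(S) ∩ A`. -/
def clA (S : Set α) : Set α := D.Th S ∩ ↑D.A

/-- An argument `S ⊢ p` is derivation redundant iff there is an argument
`S' ⊢ p ∈ A_D` with `S' ⊊ S`. -/
def DerivRedundant (x : ATree α) : Prop :=
  ∃ y, D.WF y ∧ y.root = x.root ∧ y.asms ⊂ x.asms

/-- An argument `S ⊢ p` is expendable iff `p ∉ A ∪ {‾a | a ∈ A}`. -/
def Expendable (x : ATree α) : Prop :=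
  x.root ∉ (↑D.A : Set α) ∪ D.contrary '' ↑D.A

/-- An argument `x = (S ⊢ p)` is assumption redundant iff it has a proper
sub-argument of the form `S' ⊢ a` with `S' ⊆ S` and `a ∈ A`. -/
def AsmRedundant (x : ATree α) : Prop :=
  ∃ t, ATree.Subarg t x ∧ t ≠ x ∧ t.asms ⊆ x.asms ∧ t.root ∈ D.A

/-- The instantiated BAF `F_D` of an ABAF `D`. -/
def instBAF : BAF (ATree α) where
  args := {t | D.WF t}
  att := {p | D.WF p.1 ∧ D.WF p.2 ∧ ∃ b ∈ p.2.asms, p.1.root = D.contrary b}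
  sup := {p | D.WF p.1 ∧ D.WF p.2 ∧
            ∃ a ∈ D.A, p.2 = ATree.asm a ∧ (a : α) ∈ D.clA p.1.asms}

/-- The instantiated pBAF `P_D` of an ABAF `D`, with `prem(S ⊢ p) = S`. -/
def instPBAF : PBAF (ATree α) α := ⟨D.instBAF, ATree.asms⟩

/-- The non-redundant arguments `A*_D`: obtained from `A_D` by removing all
derivation redundant arguments, then all expendable arguments, then all
assumption redundant arguments. -/
def nonRedundant : Set (ATree α) :=
  {t | D.WF t ∧ ¬ D.DerivRedundant t ∧ ¬ D.Expendable t ∧ ¬ D.AsmRedundant t}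

/-- The non-redundant core of `D`: the BAF whose arguments are the pairs
`(S, p)` for `S ⊢ p ∈ A*_D`, with the induced attack and support relations. -/
def core : BAF (Set α × α) where
  args := {x | ∃ t ∈ D.nonRedundant, x = (t.asms, t.root)}
  att := {p | ∃ b ∈ p.2.1, p.1.2 = D.contrary b}
  sup := {p | ∃ a ∈ D.A, p.2 = ({a}, a) ∧ (a : α) ∈ D.clA p.1.1}

/-! ### ABA semantics on assumption sets -/

/-- `S` attacks `T` iff `‾b ∈ Th_D(S)` for some `b ∈ T`. -/
def SAttacks (S T : Set α) : Prop := ∃ b ∈ T, D.contrary b ∈ D.Th S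

/-- `S` is conflict-free iff it does not attack itself. -/
def SConflictFree (S : Set α) : Prop := ¬ D.SAttacks S S

/-- `S` is closed iff `S = cl(S)`. -/
def SClosed (S : Set α) : Prop := S = D.clA S

/-- `S` defends `a` iff `S` attacks every closed `V ⊆ A` attacking `a`. -/
def SDefends (S : Set α) (a : α) : Prop :=
  ∀ V ⊆ (↑D.A : Set α), D.SClosed V → D.SAttacks V {a} → D.SAttacks S V

/-- `S` is admissible iff it is a closed, conflict-free set of assumptions
defending each of its elements. -/
def SAdmissible (S : Set α) : Prop :=
  S ⊆ ↑D.A ∧ D.SClosed S ∧ D.SConflictFree S ∧ ∀ a ∈ S, D.SDefends S a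

/-- `S` is complete iff it is admissible and contains every assumption it defends. -/
def SComplete (S : Set α) : Prop :=
  D.SAdmissible S ∧ ∀ a ∈ D.A, D.SDefends S a → a ∈ S

/-- `S` is preferred iff it is ⊆-maximal among complete sets. -/
def SPreferred (S : Set α) : Prop :=
  D.SComplete S ∧ ∀ T, D.SComplete T → S ⊆ T → T = S

/-- `S` is grounded iff it is admissible and equal to the intersection of all
complete sets (taken to be `∅` when no complete set exists). -/
def SGrounded (S : Set α) : Prop :=
  D.SAdmissible S ∧
    (((∃ T, D.SComplete T) ∧ S = ⋂₀ {T | D.SComplete T}) ∨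
      ((¬ ∃ T, D.SComplete T) ∧ S = ∅))

/-- `S` is stable iff it is admissible and attacks every assumption outside of it. -/
def SStable (S : Set α) : Prop :=
  D.SAdmissible S ∧ ∀ a ∈ D.A, (a : α) ∉ S → D.SAttacks S {a}

/-- ⊆-maximal admissible assumption sets (`oldprf` for ABAFs). -/
def SOldPrf (S : Set α) : Prop :=
  D.SAdmissible S ∧ ∀ T, D.SAdmissible T → S ⊆ T → T = S

/-- The σ-extensions of an ABAF, σ among complete, grounded, stable, preferred. -/
def ext : Sem4 → Set α → Prop
  | .com => D.SComplete
  | .grd => D.SGrounded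
  | .stb => D.SStable
  | .prf => D.SPreferred

/-- The σ-extensions of an ABAF, σ among admissible, complete, oldprf,
preferred, grounded, stable. -/
def ext6 : Sem6 → Set α → Prop
  | .adm => D.SAdmissible
  | .com => D.SComplete
  | .oldprf => D.SOldPrf
  | .prf => D.SPreferred
  | .grd => D.SGrounded
  | .stb => D.SStable

end ABAF

/-- `asms(E)` for a set `E` of tree-based arguments. -/
def asmsOf {α : Type} (E : Set (ATree α)) : Set α := ⋃ x ∈ E, x.asms

/-- `asms(E)` for a set `E` of core arguments `(S, p)`. -/
def asmsOfCore {α : Type} (E : Set (Set α × α)) : Set α := ⋃ x ∈ E, x.1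

section Aux
variable {α : Type} [DecidableEq α]

lemma asms_asm (b : α) : (ATree.asm b).asms = {b} := by
  ext c
  constructor
  · intro h; cases h; rfl
  · rintro rfl; exact ATree.IsAsmLeaf.asm _

lemma wf_asms_sub {D : ABAF α} {t : ATree α} (h : D.WF t) : t.asms ⊆ ↑D.A := by
  induction h with
  | asm ha => rw [asms_asm]; simpa using ha
  | node r hr hh hn hb hcs ih =>
    intro a ha
    cases ha with
    | node hc hca => exact ih _ hc hca

lemma wf_asm_iff {D : ABAF α} {a : α} : D.WF (ATree.asm a) ↔ a ∈ D.A := by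
  constructor
  · intro h; cases h; exact ‹_›
  · exact ABAF.WF.asm

end Aux
section Aux2
set_option linter.unusedSectionVars false
variable {α : Type} [DecidableEq α] {D : ABAF α} {x : ATree α}

lemma x_att_none (hexp : D.Expendable x) : ∀ y, (x, y) ∉ D.instBAF.att := by
  rintro y ⟨h1, h2, b, hb, hroot⟩
  exact hexp (Or.inr ⟨b, wf_asms_sub h2 hb, hroot.symm⟩)

lemma sup_ne_x (hexp : D.Expendable x) {e y : ATree α}
    (h : (e, y) ∈ D.instBAF.sup) : y ≠ x := by
  rcases h with ⟨h1, h2, a, ha, heq, hcl⟩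
  intro hyx
  subst hyx
  apply hexp
  left
  have heq2 : y = ATree.asm a := heq
  show y.root ∈ (↑D.A : Set α)
  rw [heq2]
  simpa [ATree.root] using ha

lemma x_sup_asm (hx : D.WF x) {b : α} (hb : b ∈ x.asms) :
    (x, ATree.asm b) ∈ D.instBAF.sup := by
  have hbA : b ∈ D.A := wf_asms_sub hx hb
  refine ⟨hx, wf_asm_iff.2 hbA, b, hbA, rfl, ?_⟩
  exact ⟨⟨ATree.asm b, wf_asm_iff.2 hbA, rfl, by rw [asms_asm]; simpa using hb⟩, hbA⟩

lemma att_x_iff (hx : D.WF x) {e : ATree α} :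
    (e, x) ∈ D.instBAF.att ↔ ∃ b ∈ x.asms, (e, ATree.asm b) ∈ D.instBAF.att := by
  constructor
  · rintro ⟨h1, h2, b, hb, hroot⟩
    exact ⟨b, hb, h1, wf_asm_iff.2 (wf_asms_sub hx hb), b, by rw [asms_asm]; rfl, hroot⟩
  · rintro ⟨b, hb, h1, h2, c, hc, hroot⟩
    rw [asms_asm] at hc
    have hc2 : c = b := hc
    rw [hc2] at hroot
    exact ⟨h1, hx, b, hb, hroot⟩

end Aux2
section Aux3
set_option linter.unusedSectionVars false
variable {α : Type} [DecidableEq α] {D : ABAF α} {x : ATree α}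

lemma x_ne_asm (hexp : D.Expendable x) {b : α} (hb : b ∈ D.A) :
    x ≠ ATree.asm b := by
  intro h
  apply hexp
  left
  show x.root ∈ (↑D.A : Set α)
  rw [h]
  simpa [ATree.root] using hb

lemma cl_eq (hexp : D.Expendable x) {S : Set (ATree α)} (hxS : x ∉ S) :
    (D.instBAF).cl S = ((D.instBAF).remove x).cl S := by
  ext a
  constructor
  · rintro (h | ⟨ha, e, heS, hsup⟩)
    · exact Or.inl h
    · exact Or.inr ⟨⟨ha, sup_ne_x hexp hsup⟩, e,
        heS, hsup, fun h => hxS (h ▸ heS), sup_ne_x hexp hsup⟩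
  · rintro (h | ⟨⟨ha, _⟩, e, heS, hsup, _, _⟩)
    · exact Or.inl h
    · exact Or.inr ⟨ha, e, heS, hsup⟩

lemma closed_iff (hexp : D.Expendable x) {S : Set (ATree α)} (hxS : x ∉ S) :
    (D.instBAF).Closed S ↔ ((D.instBAF).remove x).Closed S := by
  unfold BAF.Closed
  rw [cl_eq hexp hxS]

lemma closed_sans (hexp : D.Expendable x) {S : Set (ATree α)}
    (hS : (D.instBAF).Closed S) : ((D.instBAF).remove x).Closed (S \ {x}) := by
  apply Set.Subset.antisymm
  · exact Set.subset_union_left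
  · rintro a (h | ⟨⟨ha, hax⟩, e, heS, hsup, hex, _⟩)
    · exact h
    · refine ⟨?_, hax⟩
      rw [hS]
      exact Or.inr ⟨ha, e, heS.1, hsup⟩

lemma attacksArg_sans (hexp : D.Expendable x) {E : Set (ATree α)} {y : ATree α} :
    (D.instBAF).AttacksArg E y ↔ (D.instBAF).AttacksArg (E \ {x}) y := by
  constructor
  · rintro ⟨e, heE, hatt⟩
    refine ⟨e, ⟨heE, ?_⟩, hatt⟩
    rintro rfl
    exact x_att_none hexp y hatt
  · rintro ⟨e, heE, hatt⟩
    exact ⟨e, heE.1, hatt⟩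

lemma attacksArg_transfer (hexp : D.Expendable x) {E : Set (ATree α)} {y : ATree α}
    (hxE : x ∉ E) (hyx : y ≠ x) :
    (D.instBAF).AttacksArg E y ↔ ((D.instBAF).remove x).AttacksArg E y := by
  constructor
  · rintro ⟨e, heE, hatt⟩
    exact ⟨e, heE, hatt, fun h => hxE (h ▸ heE), hyx⟩
  · rintro ⟨e, heE, hatt, _, _⟩
    exact ⟨e, heE, hatt⟩

lemma attacksSet_transfer (hexp : D.Expendable x) {E S : Set (ATree α)}
    (hxE : x ∉ E) (hxS : x ∉ S) :
    (D.instBAF).AttacksSet E S ↔ ((D.instBAF).remove x).AttacksSet E S := by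
  constructor
  · rintro ⟨a, haS, hatt⟩
    exact ⟨a, haS, (attacksArg_transfer hexp hxE (fun h => hxS (h ▸ haS))).1 hatt⟩
  · rintro ⟨a, haS, hatt⟩
    exact ⟨a, haS, (attacksArg_transfer hexp hxE (fun h => hxS (h ▸ haS))).2 hatt⟩

-- if S is closed and E attacks S, then E attacks S \ {x}
lemma attacksSet_sans_target (hexp : D.Expendable x) (hx : D.WF x)
    {E S : Set (ATree α)} (hS : (D.instBAF).Closed S)
    (h : (D.instBAF).AttacksSet E S) : (D.instBAF).AttacksSet E (S \ {x}) := by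
  rcases h with ⟨a, haS, e, heE, hatt⟩
  by_cases hax : a = x
  · subst hax
    rcases (att_x_iff hx).1 hatt with ⟨b, hb, hattb⟩
    have hbA : b ∈ D.A := wf_asms_sub hx hb
    have hmem : ATree.asm b ∈ S := by
      rw [hS]
      exact Or.inr ⟨wf_asm_iff.2 hbA, a, haS, x_sup_asm hx hb⟩
    exact ⟨ATree.asm b, ⟨hmem, fun h => x_ne_asm hexp hbA h.symm⟩, e, heE, hattb⟩
  · exact ⟨a, ⟨haS, hax⟩, e, heE, hatt⟩

lemma defends_sans (hexp : D.Expendable x) {E : Set (ATree α)} {y : ATree α}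
    (h : (D.instBAF).Defends E y) : (D.instBAF).Defends (E \ {x}) y := by
  intro S hS hcl hatt
  rcases h S hS hcl hatt with ⟨a, haS, hA⟩
  exact ⟨a, haS, (attacksArg_sans hexp).1 hA⟩

lemma defends_transfer (hexp : D.Expendable x) (hx : D.WF x)
    {E : Set (ATree α)} {y : ATree α} (hxE : x ∉ E) (hyx : y ≠ x) :
    (D.instBAF).Defends E y ↔ ((D.instBAF).remove x).Defends E y := by
  constructor
  · intro h S hS hcl hatt
    have hxS : x ∉ S := fun hxin => (hS hxin).2 rfl
    have hS' : S ⊆ (D.instBAF).args := fun a ha => (hS ha).1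
    have hclF : (D.instBAF).Closed S := (closed_iff hexp hxS).2 hcl
    have hattF : (D.instBAF).AttacksArg S y := (attacksArg_transfer hexp hxS hyx).2 hatt
    exact (attacksSet_transfer hexp hxE hxS).1 (h S hS' hclF hattF)
  · intro h S hS hcl hatt
    have hS' : S \ {x} ⊆ ((D.instBAF).remove x).args :=
      fun a ha => ⟨hS ha.1, ha.2⟩
    have hcl' := closed_sans hexp hcl
    have hatt' : ((D.instBAF).remove x).AttacksArg (S \ {x}) y := by
      rcases hatt with ⟨e, heS, he⟩
      have hex : e ≠ x := by rintro rfl; exact x_att_none hexp y he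
      exact ⟨e, ⟨heS, hex⟩, he, hex, hyx⟩
    rcases h (S \ {x}) hS' hcl' hatt' with ⟨a, haS, e, heE, hatt2, _, _⟩
    exact ⟨a, haS.1, e, heE, hatt2⟩

lemma defends_x_iff (hexp : D.Expendable x) (hx : D.WF x) {E : Set (ATree α)} :
    (D.instBAF).Defends E x ↔
      ∀ b ∈ x.asms, (D.instBAF).Defends E (ATree.asm b) := by
  constructor
  · intro h b hb S hS hcl hatt
    apply h S hS hcl
    rcases hatt with ⟨e, heS, he⟩
    exact ⟨e, heS, (att_x_iff hx).2 ⟨b, hb, he⟩⟩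
  · intro h S hS hcl hatt
    rcases hatt with ⟨e, heS, he⟩
    rcases (att_x_iff hx).1 he with ⟨b, hb, hattb⟩
    exact h b hb S hS hcl ⟨e, heS, hattb⟩

lemma gamma_transfer (hexp : D.Expendable x) (hx : D.WF x)
    {E : Set (ATree α)} (hxE : x ∉ E) :
    ((D.instBAF).remove x).gamma E = (D.instBAF).gamma E \ {x} := by
  ext y
  constructor
  · rintro ⟨⟨hy, hyx⟩, hdef⟩
    exact ⟨⟨hy, (defends_transfer hexp hx hxE hyx).2 hdef⟩, hyx⟩
  · rintro ⟨⟨hy, hdef⟩, hyx⟩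
    exact ⟨⟨hy, hyx⟩, (defends_transfer hexp hx hxE hyx).1 hdef⟩

end Aux3
section Aux4
set_option linter.unusedSectionVars false

lemma BAF.defends_mono {α : Type} (F : BAF α) {E E2 : Set α} {y : α}
    (h : E ⊆ E2) (hd : F.Defends E y) : F.Defends E2 y := by
  intro S hS hcl hatt
  rcases hd S hS hcl hatt with ⟨a, haS, e, heE, he⟩
  exact ⟨a, haS, e, h heE, he⟩

lemma BAF.adm_empty {α : Type} (F : BAF α) : F.Admissible ∅ := by
  refine ⟨Set.empty_subset _, ?_, fun y hy => hy.elim, Set.empty_subset _⟩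
  apply Set.Subset.antisymm Set.subset_union_left
  rintro a (h | ⟨ha, e, he, _⟩)
  · exact h
  · exact he.elim

lemma BAF.closed_inter {α : Type} (F : BAF α) {𝒮 : Set (Set α)}
    (h : ∀ S ∈ 𝒮, F.Closed S) : F.Closed (⋂₀ 𝒮) := by
  apply Set.Subset.antisymm Set.subset_union_left
  rintro a (ha | ⟨ha, e, he, hsup⟩)
  · exact ha
  · intro S hS
    rw [h S hS]
    exact Or.inr ⟨ha, e, he S hS, hsup⟩

variable {α : Type} [DecidableEq α] {D : ABAF α} {x : ATree α}

lemma supported_mem_of_closed (hx : D.WF x) {E : Set (ATree α)}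
    (hcl : (D.instBAF).Closed E) (hxE : x ∈ E) {a : α} (ha : a ∈ D.clA x.asms) :
    ATree.asm a ∈ E := by
  have haA : a ∈ D.A := ha.2
  rw [hcl]
  exact Or.inr ⟨wf_asm_iff.2 haA, x, hxE, hx, wf_asm_iff.2 haA, a, haA, rfl, ha⟩

lemma asm_mem_of_closed (hx : D.WF x) {E : Set (ATree α)}
    (hcl : (D.instBAF).Closed E) (hxE : x ∈ E) {b : α} (hb : b ∈ x.asms) :
    ATree.asm b ∈ E :=
  supported_mem_of_closed hx hcl hxE
    ⟨⟨ATree.asm b, wf_asm_iff.2 (wf_asms_sub hx hb), rfl,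
      by rw [asms_asm]; simpa using hb⟩, wf_asms_sub hx hb⟩

lemma asmsOf_sans (hexp : D.Expendable x) (hx : D.WF x) {E : Set (ATree α)}
    (hcl : (D.instBAF).Closed E) : asmsOf (E \ {x}) = asmsOf E := by
  apply Set.Subset.antisymm
  · exact Set.biUnion_mono Set.diff_subset (fun _ _ => le_refl _)
  · rintro a ha
    rcases Set.mem_iUnion₂.1 ha with ⟨y, hyE, hay⟩
    by_cases hyx : y = x
    · subst hyx
      have hmem : ATree.asm a ∈ E := asm_mem_of_closed hx hcl hyE hay
      refine Set.mem_biUnion ⟨hmem, x_ne_asm hexp (wf_asms_sub hx hay) ∘ Eq.symm⟩ ?_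
      rw [asms_asm]; rfl
    · exact Set.mem_biUnion ⟨hyE, hyx⟩ hay

lemma asmsOf_insert {E : Set (ATree α)}
    (hcond : ∀ b ∈ x.asms, ATree.asm b ∈ E) :
    asmsOf (E ∪ {x}) = asmsOf E := by
  apply Set.Subset.antisymm
  · rintro a ha
    rcases Set.mem_iUnion₂.1 ha with ⟨y, hyE, hay⟩
    rcases hyE with hyE | hyx
    · exact Set.mem_biUnion hyE hay
    · rcases hyx with rfl
      refine Set.mem_biUnion (hcond a hay) ?_
      rw [asms_asm]; rfl
  · exact Set.biUnion_mono Set.subset_union_left (fun _ _ => le_refl _)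

end Aux4
section Aux5
set_option linter.unusedSectionVars false
variable {α : Type} [DecidableEq α] {D : ABAF α} {x : ATree α}

lemma gamma_sans (hexp : D.Expendable x) {E : Set (ATree α)} :
    (D.instBAF).gamma (E \ {x}) = (D.instBAF).gamma E := by
  ext y
  constructor
  · rintro ⟨hy, hd⟩
    exact ⟨hy, (D.instBAF).defends_mono Set.diff_subset hd⟩
  · rintro ⟨hy, hd⟩
    exact ⟨hy, defends_sans hexp hd⟩

lemma cf_restrict {E : Set (ATree α)}
    (hcf : (D.instBAF).ConflictFree E) {E' : Set (ATree α)} (hsub : E' ⊆ E) :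
    ((D.instBAF).remove x).ConflictFree E' := by
  intro y hy z hz hatt
  exact hcf y (hsub hy) z (hsub hz) hatt.1

lemma cf_back {E : Set (ATree α)} (hxE : x ∉ E)
    (hcf : ((D.instBAF).remove x).ConflictFree E) :
    (D.instBAF).ConflictFree E := by
  intro y hy z hz hatt
  exact hcf y hy z hz ⟨hatt, fun h => hxE (h ▸ hy), fun h => hxE (h ▸ hz)⟩

lemma adm_sans (hexp : D.Expendable x) (hx : D.WF x) {E : Set (ATree α)}
    (hadm : (D.instBAF).Admissible E) :
    ((D.instBAF).remove x).Admissible (E \ {x}) := by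
  obtain ⟨hsub, hcl, hcf, hgam⟩ := hadm
  have hxE' : x ∉ E \ {x} := fun h => h.2 rfl
  refine ⟨fun y hy => ⟨hsub hy.1, hy.2⟩, closed_sans hexp hcl,
    cf_restrict hcf Set.diff_subset, ?_⟩
  intro y hy
  have hd : (D.instBAF).Defends E y := (hgam hy.1).2
  have hd' := defends_sans hexp hd
  exact ⟨⟨hsub hy.1, hy.2⟩, (defends_transfer hexp hx hxE' hy.2).1 hd'⟩

lemma adm_back (hexp : D.Expendable x) (hx : D.WF x) {E : Set (ATree α)}
    (hxE : x ∉ E) (hadm : ((D.instBAF).remove x).Admissible E) :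
    (D.instBAF).Admissible E := by
  obtain ⟨hsub, hcl, hcf, hgam⟩ := hadm
  refine ⟨fun y hy => (hsub hy).1, (closed_iff hexp hxE).2 hcl, cf_back hxE hcf, ?_⟩
  intro y hy
  have hyx : y ≠ x := (hsub hy).2
  exact ⟨(hsub hy).1, (defends_transfer hexp hx hxE hyx).2 (hgam hy).2⟩

lemma complete_sans (hexp : D.Expendable x) (hx : D.WF x) {E : Set (ATree α)}
    (hE : (D.instBAF).Complete E) : ((D.instBAF).remove x).Complete (E \ {x}) := by
  obtain ⟨hadm, heq⟩ := hE
  have hxE' : x ∉ E \ {x} := fun h => h.2 rfl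
  refine ⟨adm_sans hexp hx hadm, ?_⟩
  rw [gamma_transfer hexp hx hxE', gamma_sans hexp, ← heq]

-- the key auxiliary: supports from x land inside complete G-extensions
lemma supp_mem_of_Gcomplete (hexp : D.Expendable x) (hx : D.WF x)
    {E : Set (ATree α)} (hE : ((D.instBAF).remove x).Complete E)
    {a : α} (ha : a ∈ D.clA x.asms)
    (hcond : ∀ b ∈ x.asms, ATree.asm b ∈ E) : ATree.asm a ∈ E := by
  obtain ⟨⟨hsub, hcl, hcf, hgam⟩, heq⟩ := hE
  obtain ⟨⟨t, hwf, hroot, hasms⟩, haA⟩ := ha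
  have htx : t ≠ x := by
    intro h
    subst h
    exact hexp (Or.inl (by rw [hroot]; exact_mod_cast haA))
  -- t is defended by E in G
  have htE : t ∈ E := by
    rw [heq]
    refine ⟨⟨hwf, htx⟩, ?_⟩
    intro S hS hScl hSatt
    rcases hSatt with ⟨e, heS, he, hex, _⟩
    rcases he with ⟨hwe, hwt, b, hbt, hrootb⟩
    have hbx : b ∈ x.asms := hasms hbt
    have hbA : b ∈ D.A := wf_asms_sub hx hbx
    have hasmb : ATree.asm b ∈ E := hcond b hbx
    have hd : ((D.instBAF).remove x).Defends E (ATree.asm b) := (hgam hasmb).2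
    apply hd S hS hScl
    refine ⟨e, heS, ⟨hwe, wf_asm_iff.2 hbA, b, ?_, hrootb⟩, hex,
      fun h => x_ne_asm hexp hbA h.symm⟩
    rw [asms_asm]; rfl
  -- t supports asm a in G, so asm a ∈ cl(E) = E
  rw [hcl]
  refine Or.inr ⟨⟨wf_asm_iff.2 haA, fun h => x_ne_asm hexp haA (Eq.symm h)⟩, t, htE,
    ⟨⟨hwf, wf_asm_iff.2 haA, a, haA, rfl, ⟨⟨t, hwf, hroot, le_refl _⟩, haA⟩⟩,
      htx, fun h => x_ne_asm hexp haA (Eq.symm h)⟩⟩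

lemma adm_add (hexp : D.Expendable x) (hx : D.WF x) {E : Set (ATree α)}
    (hadm : ((D.instBAF).remove x).Admissible E)
    (hcond : ∀ b ∈ x.asms, ATree.asm b ∈ E)
    (hsupp : ∀ a ∈ D.clA x.asms, ATree.asm a ∈ E) :
    (D.instBAF).Admissible (E ∪ {x}) := by
  obtain ⟨hsub, hcl, hcf, hgam⟩ := hadm
  have hxE : x ∉ E := fun h => (hsub h).2 rfl
  constructor
  · rintro y (hy | hy)
    · exact (hsub hy).1
    · have h2 : x = y := Eq.symm hy
      subst h2; exact hx
  refine ⟨?_, ?_, ?_⟩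
  · -- closed
    apply Set.Subset.antisymm Set.subset_union_left
    rintro a (ha | ⟨haw, e, heE, hsup⟩)
    · exact ha
    · rcases heE with heE | hex
      · -- supporter in E
        left
        have hax : a ≠ x := sup_ne_x hexp hsup
        have : a ∈ ((D.instBAF).remove x).cl E := Or.inr ⟨⟨haw, hax⟩, e, heE,
          hsup, fun h => hxE (h ▸ heE), hax⟩
        rwa [← hcl] at this
      · -- supporter is x
        have h2 : x = e := Eq.symm hex
        subst h2
        rcases hsup with ⟨_, _, a0, ha0, heqa, hcla⟩
        left
        have heqa2 : a = ATree.asm a0 := heqa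
        rw [heqa2]
        exact hsupp a0 hcla
  · -- conflict free
    rintro y (hy | hy) z (hz | hz) hatt
    · exact cf_back hxE hcf y hy z hz hatt
    · have h2 : x = z := Eq.symm hz
      subst h2
      rcases (att_x_iff hx).1 hatt with ⟨b, hb, hattb⟩
      have hbA : b ∈ D.A := wf_asms_sub hx hb
      exact hcf y hy (ATree.asm b) (hcond b hb)
        ⟨hattb, fun h => hxE (h ▸ hy), fun h => x_ne_asm hexp hbA h.symm⟩
    · have h2 : x = y := Eq.symm hy
      subst h2; exact x_att_none hexp z hatt
    · have h2 : x = y := Eq.symm hy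
      subst h2; exact x_att_none hexp z hatt
  · -- E ∪ {x} ⊆ gamma
    rintro y (hy | hy)
    · refine ⟨(hsub hy).1, ?_⟩
      exact (D.instBAF).defends_mono Set.subset_union_left
        ((defends_transfer hexp hx hxE (hsub hy).2).2 (hgam hy).2)
    · have h2 : x = y := Eq.symm hy
      subst h2
      refine ⟨hx, ?_⟩
      apply (D.instBAF).defends_mono Set.subset_union_left
      rw [defends_x_iff hexp hx]
      intro b hb
      have hbA : b ∈ D.A := wf_asms_sub hx hb
      exact (defends_transfer hexp hx hxE
        (fun h => x_ne_asm hexp hbA h.symm)).2 (hgam (hcond b hb)).2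

lemma complete_add (hexp : D.Expendable x) (hx : D.WF x) {E : Set (ATree α)}
    (hE : ((D.instBAF).remove x).Complete E)
    (hcond : ∀ b ∈ x.asms, ATree.asm b ∈ E) :
    (D.instBAF).Complete (E ∪ {x}) := by
  have hadm := adm_add hexp hx hE.1 hcond
    (fun a ha => supp_mem_of_Gcomplete hexp hx hE ha hcond)
  have hxE : x ∉ E := fun h => (hE.1.1 h).2 rfl
  refine ⟨hadm, ?_⟩
  -- E ∪ {x} = gamma (E ∪ {x}); note gamma (E ∪ {x}) = gamma E
  have hgeq : (D.instBAF).gamma (E ∪ {x}) = (D.instBAF).gamma E := by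
    have h1 : (E ∪ {x}) \ {x} = E := by
      ext y
      simp only [Set.mem_diff, Set.mem_union, Set.mem_singleton_iff]
      constructor
      · rintro ⟨hy | hy, hyx⟩
        · exact hy
        · exact absurd hy hyx
      · intro hy; exact ⟨Or.inl hy, fun h => hxE (h ▸ hy)⟩
    rw [← gamma_sans hexp (E := E ∪ {x}), h1]
  rw [hgeq]
  ext y
  constructor
  · rintro (hy | hy)
    · have : y ∈ ((D.instBAF).remove x).gamma E := by rw [← hE.2]; exact hy
      rw [gamma_transfer hexp hx hxE] at this
      exact this.1
    · have h2x : x = y := Eq.symm hy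
      subst h2x
      have h2 : (D.instBAF).Defends E x := by
        rw [defends_x_iff hexp hx]
        intro b hb
        have hbA : b ∈ D.A := wf_asms_sub hx hb
        exact (defends_transfer hexp hx hxE
          (fun h => x_ne_asm hexp hbA h.symm)).2 (hE.1.2.2.2 (hcond b hb)).2
      exact ⟨hx, h2⟩
  · intro hy
    by_cases hyx : y = x
    · exact Or.inr hyx
    · left
      have : y ∈ (D.instBAF).gamma E \ {x} := ⟨hy, hyx⟩
      rw [← gamma_transfer hexp hx hxE, ← hE.2] at this
      exact this

lemma complete_noadd (hexp : D.Expendable x) (hx : D.WF x) {E : Set (ATree α)}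
    (hE : ((D.instBAF).remove x).Complete E)
    (hcond : ¬ ∀ b ∈ x.asms, ATree.asm b ∈ E) :
    (D.instBAF).Complete E := by
  have hxE : x ∉ E := fun h => (hE.1.1 h).2 rfl
  refine ⟨adm_back hexp hx hxE hE.1, ?_⟩
  ext y
  constructor
  · intro hy
    have : y ∈ (D.instBAF).gamma E \ {x} := by
      rw [← gamma_transfer hexp hx hxE, ← hE.2]
      exact hy
    exact ⟨this.1.1, this.1.2⟩
  · rintro ⟨hyw, hyd⟩
    by_cases hyx : y = x
    · -- impossible: x defended implies all asm b defended hence in E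
      exfalso
      apply hcond
      intro b hb
      have hbA : b ∈ D.A := wf_asms_sub hx hb
      rw [hyx] at hyd
      have hd : (D.instBAF).Defends E (ATree.asm b) :=
        (defends_x_iff hexp hx).1 hyd b hb
      have : ATree.asm b ∈ ((D.instBAF).remove x).gamma E := by
        rw [gamma_transfer hexp hx hxE]
        exact ⟨⟨wf_asm_iff.2 hbA, hd⟩, fun h => x_ne_asm hexp hbA (Eq.symm h)⟩
      rwa [← hE.2] at this
    · have : y ∈ ((D.instBAF).remove x).gamma E := by
        rw [gamma_transfer hexp hx hxE]
        exact ⟨⟨hyw, hyd⟩, hyx⟩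
      rwa [← hE.2] at this

-- facts about complete F-extensions and x
lemma cond_of_mem (hexp : D.Expendable x) (hx : D.WF x) {E : Set (ATree α)}
    (hcl : (D.instBAF).Closed E) (hxE : x ∈ E) :
    ∀ b ∈ x.asms, ATree.asm b ∈ E \ {x} := by
  intro b hb
  exact ⟨asm_mem_of_closed hx hcl hxE hb,
    fun h => x_ne_asm hexp (wf_asms_sub hx hb) h.symm⟩

lemma not_cond_of_notmem (hexp : D.Expendable x) (hx : D.WF x) {E : Set (ATree α)}
    (hE : (D.instBAF).Complete E) (hxE : x ∉ E) :
    ¬ ∀ b ∈ x.asms, ATree.asm b ∈ E := by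
  intro h
  apply hxE
  rw [hE.2]
  refine ⟨hx, ?_⟩
  rw [defends_x_iff hexp hx]
  intro b hb
  have := hE.1.2.2.2 (h b hb)
  exact this.2

end Aux5
section Aux6
set_option linter.unusedSectionVars false
variable {α : Type} [DecidableEq α] {D : ABAF α} {x : ATree α}

lemma Gcomplete_char (hexp : D.Expendable x) (hx : D.WF x) {E' : Set (ATree α)} :
    ((D.instBAF).remove x).Complete E' ↔
      ∃ E, (D.instBAF).Complete E ∧ E' = E \ {x} := by
  constructor
  · intro h
    have hxE' : x ∉ E' := fun hh => (h.1.1 hh).2 rfl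
    by_cases hcond : ∀ b ∈ x.asms, ATree.asm b ∈ E'
    · refine ⟨E' ∪ {x}, complete_add hexp hx h hcond, ?_⟩
      ext y
      simp only [Set.mem_diff, Set.mem_union, Set.mem_singleton_iff]
      constructor
      · intro hy; exact ⟨Or.inl hy, fun hh => hxE' (hh ▸ hy)⟩
      · rintro ⟨hy | hy, hyx⟩
        · exact hy
        · exact absurd hy hyx
    · exact ⟨E', complete_noadd hexp hx h hcond,
        (Set.diff_singleton_eq_self hxE').symm⟩
  · rintro ⟨E, hE, rfl⟩
    exact complete_sans hexp hx hE

lemma exists_complete_iff (hexp : D.Expendable x) (hx : D.WF x) :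
    (∃ E, (D.instBAF).Complete E) ↔ ∃ E', ((D.instBAF).remove x).Complete E' := by
  constructor
  · rintro ⟨E, hE⟩; exact ⟨E \ {x}, complete_sans hexp hx hE⟩
  · rintro ⟨E', hE'⟩
    rcases (Gcomplete_char hexp hx).1 hE' with ⟨E, hE, _⟩
    exact ⟨E, hE⟩

lemma inter_complete_eq (hexp : D.Expendable x) (hx : D.WF x)
    (hne : ∃ E, (D.instBAF).Complete E) :
    ⋂₀ {S | ((D.instBAF).remove x).Complete S} =
      (⋂₀ {S | (D.instBAF).Complete S}) \ {x} := by
  ext y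
  simp only [Set.mem_sInter, Set.mem_setOf_eq, Set.mem_diff,
    Set.mem_singleton_iff]
  constructor
  · intro h
    obtain ⟨E0, hE0⟩ := hne
    have h0 := h (E0 \ {x}) (complete_sans hexp hx hE0)
    refine ⟨fun E hE => (h (E \ {x}) (complete_sans hexp hx hE)).1, h0.2⟩
  · rintro ⟨hall, hyx⟩ E' hE'
    rcases (Gcomplete_char hexp hx).1 hE' with ⟨E, hE, rfl⟩
    exact ⟨hall E hE, hyx⟩

lemma supp_mem_of_Gstable (hexp : D.Expendable x) (hx : D.WF x)
    {E : Set (ATree α)} (hE : ((D.instBAF).remove x).Stable E)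
    (hcond : ∀ b ∈ x.asms, ATree.asm b ∈ E)
    {a : α} (ha : a ∈ D.clA x.asms) : ATree.asm a ∈ E := by
  obtain ⟨⟨hsub, hcl, hcf, hgam⟩, hatt⟩ := hE
  obtain ⟨⟨t, hwf, hroot, hasms⟩, haA⟩ := ha
  have htx : t ≠ x := by
    intro h
    subst h
    exact hexp (Or.inl (by rw [hroot]; exact_mod_cast haA))
  have htE : t ∈ E := by
    by_contra htE
    rcases hatt t ⟨hwf, htx⟩ htE with ⟨e, heE, he, hex, _⟩
    rcases he with ⟨hwe, hwt, b, hbt, hrootb⟩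
    have hbx : b ∈ x.asms := hasms hbt
    have hbA : b ∈ D.A := wf_asms_sub hx hbx
    refine hcf e heE (ATree.asm b) (hcond b hbx)
      ⟨⟨hwe, wf_asm_iff.2 hbA, b, ?_, hrootb⟩, hex,
        fun h => x_ne_asm hexp hbA h.symm⟩
    rw [asms_asm]; rfl
  rw [hcl]
  refine Or.inr ⟨⟨wf_asm_iff.2 haA, fun h => x_ne_asm hexp haA (Eq.symm h)⟩, t, htE,
    ⟨⟨hwf, wf_asm_iff.2 haA, a, haA, rfl, ⟨⟨t, hwf, hroot, le_refl _⟩, haA⟩⟩,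
      htx, fun h => x_ne_asm hexp haA (Eq.symm h)⟩⟩

lemma stable_sans (hexp : D.Expendable x) (hx : D.WF x) {E : Set (ATree α)}
    (hE : (D.instBAF).Stable E) : ((D.instBAF).remove x).Stable (E \ {x}) := by
  obtain ⟨hadm, hatt⟩ := hE
  refine ⟨adm_sans hexp hx hadm, ?_⟩
  rintro a ⟨haw, hax⟩ haE
  have haE2 : a ∉ E := fun h => haE ⟨h, hax⟩
  have h1 := hatt a haw haE2
  have hxE' : x ∉ E \ {x} := fun h => h.2 rfl
  exact (attacksArg_transfer hexp hxE' hax).1 ((attacksArg_sans hexp).1 h1)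

lemma stable_add (hexp : D.Expendable x) (hx : D.WF x) {E : Set (ATree α)}
    (hE : ((D.instBAF).remove x).Stable E)
    (hcond : ∀ b ∈ x.asms, ATree.asm b ∈ E) :
    (D.instBAF).Stable (E ∪ {x}) := by
  refine ⟨adm_add hexp hx hE.1 hcond
    (fun a ha => supp_mem_of_Gstable hexp hx hE hcond ha), ?_⟩
  intro a haw haE
  have hax : a ≠ x := fun h => haE (Or.inr h)
  have haE2 : a ∉ E := fun h => haE (Or.inl h)
  rcases hE.2 a ⟨haw, hax⟩ haE2 with ⟨e, heE, he, _, _⟩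
  exact ⟨e, Or.inl heE, he⟩

lemma stable_noadd (hexp : D.Expendable x) (hx : D.WF x) {E : Set (ATree α)}
    (hE : ((D.instBAF).remove x).Stable E)
    (hcond : ¬ ∀ b ∈ x.asms, ATree.asm b ∈ E) :
    (D.instBAF).Stable E := by
  have hxE : x ∉ E := fun h => (hE.1.1 h).2 rfl
  refine ⟨adm_back hexp hx hxE hE.1, ?_⟩
  intro a haw haE
  by_cases hax : a = x
  · push_neg at hcond
    rcases hcond with ⟨b, hb, hbE⟩
    have hbA : b ∈ D.A := wf_asms_sub hx hb
    rcases hE.2 (ATree.asm b) ⟨wf_asm_iff.2 hbA, fun h => x_ne_asm hexp hbA (Eq.symm h)⟩ hbE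
      with ⟨e, heE, he, hex, _⟩
    rw [hax]
    exact ⟨e, heE, (att_x_iff hx).2 ⟨b, hb, he⟩⟩
  · rcases hE.2 a ⟨haw, hax⟩ haE with ⟨e, heE, he, _, _⟩
    exact ⟨e, heE, he⟩

end Aux6
section Aux7
set_option linter.unusedSectionVars false
variable {α : Type} [DecidableEq α] {D : ABAF α} {x : ATree α}

lemma union_singleton_diff {T : Set (ATree α)} (hxT : x ∉ T) :
    (T ∪ {x}) \ {x} = T := by
  ext y
  simp only [Set.mem_diff, Set.mem_union, Set.mem_singleton_iff]
  constructor
  · rintro ⟨hy | hy, hyx⟩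
    · exact hy
    · exact absurd hy hyx
  · intro hy; exact ⟨Or.inl hy, fun h => hxT (h ▸ hy)⟩

lemma preferred_sans (hexp : D.Expendable x) (hx : D.WF x) {E : Set (ATree α)}
    (hE : (D.instBAF).Preferred E) :
    ((D.instBAF).remove x).Preferred (E \ {x}) := by
  obtain ⟨hcom, hmax⟩ := hE
  refine ⟨complete_sans hexp hx hcom, ?_⟩
  intro T hT hsub
  have hxT : x ∉ T := fun h => (hT.1.1 h).2 rfl
  by_cases hxE : x ∈ E
  · have hcondT : ∀ b ∈ x.asms, ATree.asm b ∈ T :=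
      fun b hb => hsub (cond_of_mem hexp hx hcom.1.2.1 hxE b hb)
    have hTx : (D.instBAF).Complete (T ∪ {x}) := complete_add hexp hx hT hcondT
    have hEsub : E ⊆ T ∪ {x} := by
      intro y hy
      by_cases hyx : y = x
      · exact Or.inr hyx
      · exact Or.inl (hsub ⟨hy, hyx⟩)
    have := hmax (T ∪ {x}) hTx hEsub
    rw [← this, union_singleton_diff hxT]
  · rw [Set.diff_singleton_eq_self hxE] at hsub ⊢
    by_cases hcondT : ∀ b ∈ x.asms, ATree.asm b ∈ T
    · exfalso
      have hTx : (D.instBAF).Complete (T ∪ {x}) := complete_add hexp hx hT hcondT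
      have := hmax (T ∪ {x}) hTx (hsub.trans Set.subset_union_left)
      exact hxE (this ▸ (Or.inr rfl : x ∈ T ∪ {x}))
    · exact hmax T (complete_noadd hexp hx hT hcondT) hsub

lemma preferred_back (hexp : D.Expendable x) (hx : D.WF x) {E' : Set (ATree α)}
    (hE' : ((D.instBAF).remove x).Preferred E') :
    ∃ E, (D.instBAF).Preferred E ∧ asmsOf E = asmsOf E' := by
  obtain ⟨hcom', hmax'⟩ := hE'
  have hxE' : x ∉ E' := fun h => (hcom'.1.1 h).2 rfl
  by_cases hcond : ∀ b ∈ x.asms, ATree.asm b ∈ E'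
  · refine ⟨E' ∪ {x}, ⟨complete_add hexp hx hcom' hcond, ?_⟩, asmsOf_insert hcond⟩
    intro T hT hsub
    have hxT : x ∈ T := hsub (Or.inr rfl)
    have hT' : ((D.instBAF).remove x).Complete (T \ {x}) := complete_sans hexp hx hT
    have hsub' : E' ⊆ T \ {x} := fun y hy =>
      ⟨hsub (Or.inl hy), fun h => hxE' (h ▸ hy)⟩
    have heq := hmax' (T \ {x}) hT' hsub'
    rw [← heq, Set.diff_union_of_subset (Set.singleton_subset_iff.2 hxT)]
  · refine ⟨E', ⟨complete_noadd hexp hx hcom' hcond, ?_⟩, rfl⟩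
    intro T hT hsub
    by_cases hxT : x ∈ T
    · exfalso
      apply hcond
      intro b hb
      have := cond_of_mem hexp hx hT.1.2.1 hxT b hb
      have heq := hmax' (T \ {x}) (complete_sans hexp hx hT)
        (fun y hy => ⟨hsub hy, fun h => hxE' (h ▸ hy)⟩)
      rw [← heq]
      exact this
    · have hT' := complete_sans hexp hx hT
      rw [Set.diff_singleton_eq_self hxT] at hT'
      exact hmax' T hT' hsub

lemma grounded_sans (hexp : D.Expendable x) (hx : D.WF x) {E : Set (ATree α)}
    (hE : (D.instBAF).Grounded E) :
    ∃ E', ((D.instBAF).remove x).Grounded E' ∧ asmsOf E' = asmsOf E := by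
  obtain ⟨hadm, hcase⟩ := hE
  rcases hcase with ⟨hex, heq⟩ | ⟨hnex, heq⟩
  · refine ⟨E \ {x}, ⟨adm_sans hexp hx hadm, Or.inl ⟨?_, ?_⟩⟩,
      asmsOf_sans hexp hx hadm.2.1⟩
    · exact (exists_complete_iff hexp hx).1 hex
    · rw [inter_complete_eq hexp hx hex, heq]
  · refine ⟨∅, ⟨(D.instBAF.remove x).adm_empty, Or.inr ⟨?_, rfl⟩⟩, by rw [heq]⟩
    intro hexG
    exact hnex ((exists_complete_iff hexp hx).2 hexG)

lemma grounded_back (hexp : D.Expendable x) (hx : D.WF x) {E' : Set (ATree α)}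
    (hE' : ((D.instBAF).remove x).Grounded E') :
    ∃ E, (D.instBAF).Grounded E ∧ asmsOf E = asmsOf E' := by
  obtain ⟨hadm', hcase⟩ := hE'
  rcases hcase with ⟨hexG, heq⟩ | ⟨hnexG, heq⟩
  · have hexF : ∃ E, (D.instBAF).Complete E := (exists_complete_iff hexp hx).2 hexG
    have heq2 : E' = (⋂₀ {S | (D.instBAF).Complete S}) \ {x} := by
      rw [heq, inter_complete_eq hexp hx hexF]
    by_cases hxI : x ∈ ⋂₀ {S | (D.instBAF).Complete S}
    · have hcond : ∀ b ∈ x.asms, ATree.asm b ∈ E' := by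
        intro b hb
        rw [heq2]
        refine ⟨?_, fun h => x_ne_asm hexp (wf_asms_sub hx hb) h.symm⟩
        intro C hC
        exact asm_mem_of_closed hx hC.1.2.1 (hxI C hC) hb
      have hsupp : ∀ a ∈ D.clA x.asms, ATree.asm a ∈ E' := by
        intro a ha
        rw [heq2]
        refine ⟨?_, fun h => x_ne_asm hexp ha.2 h.symm⟩
        intro C hC
        exact supported_mem_of_closed hx hC.1.2.1 (hxI C hC) ha
      have hIeq : ⋂₀ {S | (D.instBAF).Complete S} = E' ∪ {x} := by
        rw [heq2, Set.diff_union_of_subset (Set.singleton_subset_iff.2 hxI)]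
      refine ⟨⋂₀ {S | (D.instBAF).Complete S}, ⟨?_, Or.inl ⟨hexF, rfl⟩⟩, ?_⟩
      · rw [hIeq]
        exact adm_add hexp hx hadm' hcond hsupp
      · rw [hIeq, asmsOf_insert hcond]
    · have heq3 : E' = ⋂₀ {S | (D.instBAF).Complete S} := by
        rw [heq2, Set.diff_singleton_eq_self hxI]
      refine ⟨E', ⟨adm_back hexp hx (fun h => (hadm'.1 h).2 rfl) hadm',
        Or.inl ⟨hexF, heq3⟩⟩, rfl⟩
  · refine ⟨∅, ⟨(D.instBAF).adm_empty, Or.inr ⟨?_, rfl⟩⟩, by rw [heq]⟩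
    intro hexF
    exact hnexG ((exists_complete_iff hexp hx).1 hexF)

end Aux7
/-- removing an expendable argument from the instantiated BAF
preserves the assumption extensions under complete, grounded, stable and
preferred semantics. -/
theorem expendable_removal_preserves_semantics {α : Type} [DecidableEq α]
    (D : ABAF α) (x : ATree α) (hx : D.WF x) (hexp : D.Expendable x)
    (σ : Sem4) :
    {S | ∃ E, (D.instBAF).ext σ E ∧ S = asmsOf E} =
      {S | ∃ E, ((D.instBAF).remove x).ext σ E ∧ S = asmsOf E} := by
  cases σ with
  | com =>
    ext S
    simp only [Set.mem_setOf_eq, BAF.ext]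
    constructor
    · rintro ⟨E, hE, rfl⟩
      exact ⟨E \ {x}, complete_sans hexp hx hE,
        (asmsOf_sans hexp hx hE.1.2.1).symm⟩
    · rintro ⟨E', hE', rfl⟩
      by_cases hcond : ∀ b ∈ x.asms, ATree.asm b ∈ E'
      · exact ⟨E' ∪ {x}, complete_add hexp hx hE' hcond,
          (asmsOf_insert hcond).symm⟩
      · exact ⟨E', complete_noadd hexp hx hE' hcond, rfl⟩
  | grd =>
    ext S
    simp only [Set.mem_setOf_eq, BAF.ext]
    constructor
    · rintro ⟨E, hE, rfl⟩
      rcases grounded_sans hexp hx hE with ⟨E', hE', heq⟩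
      exact ⟨E', hE', heq.symm⟩
    · rintro ⟨E', hE', rfl⟩
      rcases grounded_back hexp hx hE' with ⟨E, hE, heq⟩
      exact ⟨E, hE, heq.symm⟩
  | stb =>
    ext S
    simp only [Set.mem_setOf_eq, BAF.ext]
    constructor
    · rintro ⟨E, hE, rfl⟩
      exact ⟨E \ {x}, stable_sans hexp hx hE,
        (asmsOf_sans hexp hx hE.1.2.1).symm⟩
    · rintro ⟨E', hE', rfl⟩
      by_cases hcond : ∀ b ∈ x.asms, ATree.asm b ∈ E'
      · exact ⟨E' ∪ {x}, stable_add hexp hx hE' hcond,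
          (asmsOf_insert hcond).symm⟩
      · exact ⟨E', stable_noadd hexp hx hE' hcond, rfl⟩
  | prf =>
    ext S
    simp only [Set.mem_setOf_eq, BAF.ext]
    constructor
    · rintro ⟨E, hE, rfl⟩
      exact ⟨E \ {x}, preferred_sans hexp hx hE,
        (asmsOf_sans hexp hx hE.1.1.2.1).symm⟩
    · rintro ⟨E', hE', rfl⟩
      rcases preferred_back hexp hx hE' with ⟨E, hE, heq⟩
      exact ⟨E, hE, heq.symm⟩
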